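/- For the time-oscillating logistic equation with velocity u(x,τ) = a(τ)x − a(τ)b(τ)x², where a = ā + ã and b = b̄ + b̃ with ã, b̃ zero-average 2π-periodic, the drift velocity is V̄₂(x) = −K x² with K = ⟨ã^τ ã b̃⟩ − ā ⟨ã b̃^τ⟩. -/

import Mathlib

/-- The τ-average of a function over one period `[0, 2π]`. -/
noncomputable def avg (h : ℝ → ℝ) : ℝ :=
  (1 / (2 * Real.pi)) * ∫ τ in (0:ℝ)..(2 * Real.pi), h τ

/-- Tilde-integration: the zero-average antiderivative of a zero-average periodic function. -/
noncomputable def tint (h : ℝ → ℝ) : ℝ → ℝ :=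
  fun τ => (∫ σ in (0:ℝ)..τ, h σ) - avg (fun t => ∫ σ in (0:ℝ)..t, h σ)

open intervalIntegral MeasureTheory

lemma my_avg_congr {f g : ℝ → ℝ} (h : ∀ τ, f τ = g τ) : avg f = avg g := by
  rw [funext h]

lemma my_avg_const (c : ℝ) : avg (fun _ => c) = c := by
  simp [avg]
  field_simp

lemma my_avg_comb2 {f g : ℝ → ℝ} (hf : Continuous f) (hg : Continuous g) (p q : ℝ) :
    avg (fun τ => p * f τ + q * g τ) = p * avg f + q * avg g := by
  unfold avg
  rw [intervalIntegral.integral_add ((continuous_const.fun_mul hf).intervalIntegrable _ _)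
    ((continuous_const.fun_mul hg).intervalIntegrable _ _), intervalIntegral.integral_const_mul,
    intervalIntegral.integral_const_mul]
  ring

lemma Fcont {f : ℝ → ℝ} (hf : Continuous f) :
    Continuous fun t => ∫ σ in (0:ℝ)..t, f σ :=
  continuous_iff_continuousAt.2 fun τ =>
    (intervalIntegral.integral_hasDerivAt_right (hf.intervalIntegrable 0 τ)
      (hf.stronglyMeasurableAtFilter _ _) hf.continuousAt).continuousAt

lemma tint_hasDerivAt {f : ℝ → ℝ} (hf : Continuous f) (τ : ℝ) :
    HasDerivAt (tint f) (f τ) τ := by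
  have h1 : HasDerivAt (fun t => ∫ σ in (0:ℝ)..t, f σ) (f τ) τ :=
    intervalIntegral.integral_hasDerivAt_right (hf.intervalIntegrable 0 τ)
      (hf.stronglyMeasurableAtFilter _ _) hf.continuousAt
  exact h1.sub_const _

lemma tint_continuous {f : ℝ → ℝ} (hf : Continuous f) : Continuous (tint f) :=
  continuous_iff_continuousAt.2 fun τ => (tint_hasDerivAt hf τ).continuousAt

lemma my_avg_comb3 {f1 f2 f3 : ℝ → ℝ} (h1 : Continuous f1) (h2 : Continuous f2)
    (h3 : Continuous f3) (c1 c2 c3 : ℝ) :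
    avg (fun τ => c1 * f1 τ + c2 * f2 τ + c3 * f3 τ)
      = c1 * avg f1 + c2 * avg f2 + c3 * avg f3 := by
  have e : (fun τ => c1 * f1 τ + c2 * f2 τ + c3 * f3 τ)
      = fun τ => 1 * (c1 * f1 τ + c2 * f2 τ) + c3 * f3 τ := by
    funext τ; ring
  rw [e, my_avg_comb2 (by continuity) h3, my_avg_comb2 h1 h2]
  ring

lemma my_avg_comb4 {f1 f2 f3 f4 : ℝ → ℝ} (h1 : Continuous f1) (h2 : Continuous f2)
    (h3 : Continuous f3) (h4 : Continuous f4) (c1 c2 c3 c4 : ℝ) :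
    avg (fun τ => c1 * f1 τ + c2 * f2 τ + c3 * f3 τ + c4 * f4 τ)
      = c1 * avg f1 + c2 * avg f2 + c3 * avg f3 + c4 * avg f4 := by
  have e : (fun τ => c1 * f1 τ + c2 * f2 τ + c3 * f3 τ + c4 * f4 τ)
      = fun τ => 1 * (c1 * f1 τ + c2 * f2 τ + c3 * f3 τ) + c4 * f4 τ := by
    funext τ; ring
  rw [e, my_avg_comb2 (by continuity) h4, my_avg_comb3 h1 h2 h3]
  ring

lemma integral_eq_zero_of_avg {f : ℝ → ℝ} (h : avg f = 0) :
    (∫ σ in (0:ℝ)..(2*Real.pi), f σ) = 0 := by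
  unfold avg at h
  have h2 : (1:ℝ)/(2*Real.pi) ≠ 0 := by
    have := Real.pi_pos; positivity
  exact (mul_eq_zero.1 h).resolve_left h2

lemma tint_boundary {f : ℝ → ℝ} (h : avg f = 0) : tint f (2*Real.pi) = tint f 0 := by
  unfold tint
  rw [integral_eq_zero_of_avg h, intervalIntegral.integral_same]

lemma avg_tint {f : ℝ → ℝ} (hf : Continuous f) : avg (tint f) = 0 := by
  have e : tint f = fun τ => 1 * (∫ σ in (0:ℝ)..τ, f σ)
      + (-(avg fun t => ∫ σ in (0:ℝ)..t, f σ)) * 1 := by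
    funext τ; simp only [tint, mul_one, one_mul]; ring
  rw [e, my_avg_comb2 (Fcont hf) continuous_const, my_avg_const]
  ring

lemma avg_tint_mul {f g : ℝ → ℝ} (hf : Continuous f) (hg : Continuous g)
    (hf0 : avg f = 0) (hg0 : avg g = 0) :
    avg (fun τ => tint f τ * g τ) = - avg (fun τ => f τ * tint g τ) := by
  have key := intervalIntegral.integral_deriv_mul_eq_sub
    (u := tint f) (v := tint g) (u' := f) (v' := g) (a := 0) (b := 2*Real.pi)
    (fun x _ => tint_hasDerivAt hf x) (fun x _ => tint_hasDerivAt hg x)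
    (hf.intervalIntegrable _ _) (hg.intervalIntegrable _ _)
  rw [tint_boundary hf0, tint_boundary hg0, sub_self] at key
  rw [intervalIntegral.integral_add ((hf.fun_mul (tint_continuous hg)).intervalIntegrable _ _)
      (((tint_continuous hf).fun_mul hg).intervalIntegrable _ _)] at key
  have h2 : (∫ x in (0:ℝ)..2*Real.pi, tint f x * g x)
      = -∫ x in (0:ℝ)..2*Real.pi, f x * tint g x := by linarith
  unfold avg
  simp only []
  rw [h2]
  ring

lemma tint_comb {f g : ℝ → ℝ} (hf : Continuous f) (hg : Continuous g) (p q : ℝ) (τ : ℝ) :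
    tint (fun σ => p * f σ + q * g σ) τ = p * tint f τ + q * tint g τ := by
  have hI : ∀ t : ℝ, (∫ σ in (0:ℝ)..t, (p * f σ + q * g σ))
      = p * (∫ σ in (0:ℝ)..t, f σ) + q * ∫ σ in (0:ℝ)..t, g σ := by
    intro t
    rw [intervalIntegral.integral_add ((continuous_const.fun_mul hf).intervalIntegrable _ _)
      ((continuous_const.fun_mul hg).intervalIntegrable _ _), intervalIntegral.integral_const_mul,
      intervalIntegral.integral_const_mul]
  unfold tint
  rw [hI, my_avg_congr hI, my_avg_comb2 (Fcont hf) (Fcont hg)]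
  ring

/-- The logistic velocity u(x,τ) = a(τ) x − a(τ) b(τ) x² with a = ā + ã, b = b̄ + b̃. -/
noncomputable def uLog (abar bbar : ℝ) (atil btil : ℝ → ℝ) (x τ : ℝ) : ℝ :=
  (abar + atil τ) * x - (abar + atil τ) * (bbar + btil τ) * x ^ 2

/-- The oscillating (zero-average) part of the logistic velocity. -/
noncomputable def uLogTil (abar bbar : ℝ) (atil btil : ℝ → ℝ) (x τ : ℝ) : ℝ :=
  uLog abar bbar atil btil x τ - avg (fun t => uLog abar bbar atil btil x t)

noncomputable def cFun (abar bbar : ℝ) (atil btil : ℝ → ℝ) : ℝ → ℝ :=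
  fun τ => (abar + atil τ) * (bbar + btil τ)
    - avg (fun t => (abar + atil t) * (bbar + btil t))

lemma cFun_continuous {abar bbar : ℝ} {atil btil : ℝ → ℝ}
    (hA : Continuous atil) (hB : Continuous btil) :
    Continuous (cFun abar bbar atil btil) := by
  unfold cFun; continuity

lemma cFun_avg {abar bbar : ℝ} {atil btil : ℝ → ℝ}
    (hA : Continuous atil) (hB : Continuous btil) :
    avg (cFun abar bbar atil btil) = 0 := by
  have e : cFun abar bbar atil btil
      = fun τ => 1 * ((abar + atil τ) * (bbar + btil τ))
          + (-(avg (fun t => (abar + atil t) * (bbar + btil t)))) * 1 := by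
    funext τ; unfold cFun; ring
  rw [e, my_avg_comb2 (by continuity) continuous_const, my_avg_const]
  ring

lemma cFun_eq {abar bbar : ℝ} {atil btil : ℝ → ℝ}
    (hA : Continuous atil) (hB : Continuous btil)
    (haavg : avg atil = 0) (hbavg : avg btil = 0) (τ : ℝ) :
    cFun abar bbar atil btil τ
      = abar * btil τ + bbar * atil τ + atil τ * btil τ
        - avg (fun t => atil t * btil t) := by
  have e : (fun t => (abar + atil t) * (bbar + btil t))
      = fun t => (abar * bbar) * 1 + abar * btil t + bbar * atil t
          + 1 * (atil t * btil t) := by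
    funext t; ring
  have hM : avg (fun t => (abar + atil t) * (bbar + btil t))
      = abar * bbar + avg (fun t => atil t * btil t) := by
    rw [e, my_avg_comb4 continuous_const hB hA (hA.fun_mul hB), my_avg_const, haavg, hbavg]
    ring
  unfold cFun
  rw [hM]; ring

lemma uLogTil_eq {abar bbar : ℝ} {atil btil : ℝ → ℝ}
    (hA : Continuous atil) (hB : Continuous btil)
    (haavg : avg atil = 0) (x τ : ℝ) :
    uLogTil abar bbar atil btil x τ
      = atil τ * x - cFun abar bbar atil btil τ * x ^ 2 := by
  have h1 : (fun t => uLog abar bbar atil btil x t)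
      = fun t => x * atil t + (-(x^2)) * ((abar + atil t) * (bbar + btil t))
          + (abar * x) * 1 := by
    funext t; unfold uLog; ring
  have h2 : avg (fun t => uLog abar bbar atil btil x t)
      = abar * x - avg (fun t => (abar + atil t) * (bbar + btil t)) * x ^ 2 := by
    rw [h1, my_avg_comb3 hA (by continuity) continuous_const, haavg, my_avg_const]
    ring
  unfold uLogTil
  rw [h2]
  unfold uLog cFun
  ring

lemma uLogTil_deriv {abar bbar : ℝ} {atil btil : ℝ → ℝ}
    (hA : Continuous atil) (hB : Continuous btil)
    (haavg : avg atil = 0) (x τ : ℝ) :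
    deriv (fun y => uLogTil abar bbar atil btil y τ) x
      = atil τ - cFun abar bbar atil btil τ * (2 * x) := by
  have e : (fun y => uLogTil abar bbar atil btil y τ)
      = fun y => atil τ * y - cFun abar bbar atil btil τ * y ^ 2 :=
    funext fun y => uLogTil_eq hA hB haavg y τ
  rw [e]
  have h1 : HasDerivAt (fun y : ℝ => atil τ * y) (atil τ) x := by
    simpa using (hasDerivAt_id x).const_mul (atil τ)
  have h2 : HasDerivAt (fun y : ℝ => cFun abar bbar atil btil τ * y ^ 2)
      (cFun abar bbar atil btil τ * (2 * x)) x := by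
    have := (hasDerivAt_pow 2 x).const_mul (cFun abar bbar atil btil τ)
    simpa using this
  exact (h1.sub h2).deriv

theorem logistic_drift_velocity
    (abar bbar : ℝ) (atil btil : ℝ → ℝ)
    (ha : ContDiff ℝ (⊤ : ℕ∞) atil) (hb : ContDiff ℝ (⊤ : ℕ∞) btil)
    (haper : ∀ τ, atil (τ + 2 * Real.pi) = atil τ)
    (hbper : ∀ τ, btil (τ + 2 * Real.pi) = btil τ)
    (haavg : avg atil = 0) (hbavg : avg btil = 0) :
    ∀ x : ℝ,
      avg (fun τ =>
          tint (fun σ => uLogTil abar bbar atil btil x σ) τ *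
            deriv (fun y => uLogTil abar bbar atil btil y τ) x)
        = -(avg (fun τ => tint atil τ * atil τ * btil τ)
              - abar * avg (fun τ => atil τ * tint btil τ)) * x ^ 2 := by
  intro x
  have hA : Continuous atil := ha.continuous
  have hB : Continuous btil := hb.continuous
  have hCc : Continuous (cFun abar bbar atil btil) := cFun_continuous hA hB
  have hC0 : avg (cFun abar bbar atil btil) = 0 := cFun_avg hA hB
  have htA : Continuous (tint atil) := tint_continuous hA
  have htC : Continuous (tint (cFun abar bbar atil btil)) := tint_continuous hCc
  have htint : ∀ τ, tint (fun σ => uLogTil abar bbar atil btil x σ) τ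
      = x * tint atil τ + (-(x^2)) * tint (cFun abar bbar atil btil) τ := by
    intro τ
    have e : (fun σ => uLogTil abar bbar atil btil x σ)
        = fun σ => x * atil σ + (-(x^2)) * cFun abar bbar atil btil σ := by
      funext σ; rw [uLogTil_eq hA hB haavg x σ]; ring
    rw [e, tint_comb hA hCc]
  have hmain : (fun τ => tint (fun σ => uLogTil abar bbar atil btil x σ) τ *
        deriv (fun y => uLogTil abar bbar atil btil y τ) x)
      = fun τ => x * (tint atil τ * atil τ)
          + (-(x^2)) * (tint (cFun abar bbar atil btil) τ * atil τ)
          + (-(2*x^2)) * (tint atil τ * cFun abar bbar atil btil τ)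
          + (2*x^3) * (tint (cFun abar bbar atil btil) τ * cFun abar bbar atil btil τ) := by
    funext τ
    rw [htint τ, uLogTil_deriv hA hB haavg x τ]
    ring
  rw [hmain, my_avg_comb4 (htA.fun_mul hA) (htC.fun_mul hA) (htA.fun_mul hCc) (htC.fun_mul hCc)]
  have z1 : avg (fun τ => tint atil τ * atil τ) = 0 := by
    have h := avg_tint_mul hA hA haavg haavg
    have h2 : avg (fun τ => atil τ * tint atil τ) = avg (fun τ => tint atil τ * atil τ) :=
      my_avg_congr fun τ => mul_comm _ _
    rw [h2] at h
    linarith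
  have z2 : avg (fun τ => tint (cFun abar bbar atil btil) τ * cFun abar bbar atil btil τ)
      = 0 := by
    have h := avg_tint_mul hCc hCc hC0 hC0
    have h2 : avg (fun τ => cFun abar bbar atil btil τ * tint (cFun abar bbar atil btil) τ)
        = avg (fun τ => tint (cFun abar bbar atil btil) τ * cFun abar bbar atil btil τ) :=
      my_avg_congr fun τ => mul_comm _ _
    rw [h2] at h
    linarith
  have e3 : avg (fun τ => tint (cFun abar bbar atil btil) τ * atil τ)
      = - avg (fun τ => tint atil τ * cFun abar bbar atil btil τ) := by
    have h := avg_tint_mul hCc hA hC0 haavg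
    have h2 : avg (fun τ => cFun abar bbar atil btil τ * tint atil τ)
        = avg (fun τ => tint atil τ * cFun abar bbar atil btil τ) :=
      my_avg_congr fun τ => mul_comm _ _
    rw [h2] at h
    exact h
  have e4 : avg (fun τ => tint atil τ * cFun abar bbar atil btil τ)
      = avg (fun τ => tint atil τ * atil τ * btil τ)
        - abar * avg (fun τ => atil τ * tint btil τ) := by
    have e : (fun τ => tint atil τ * cFun abar bbar atil btil τ)
        = fun τ => abar * (tint atil τ * btil τ) + bbar * (tint atil τ * atil τ)
            + 1 * (tint atil τ * atil τ * btil τ)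
            + (-(avg (fun t => atil t * btil t))) * tint atil τ := by
      funext τ; rw [cFun_eq hA hB haavg hbavg τ]; ring
    rw [e, my_avg_comb4 (htA.fun_mul hB) (htA.fun_mul hA) ((htA.fun_mul hA).fun_mul hB) htA, z1,
      avg_tint hA, avg_tint_mul hA hB haavg hbavg]
    ring
  rw [z1, z2, e3, e4]
  ring
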